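/- Let G be an undirected graph on the nodes {1,…,d} with i ~ i for all i, let 0 < α ≤ β, 0 < h ≤ 1/β, and q = exp(−hα). Let A_1, …, A_N be symmetric d×d real matrices with α·I ⪯ A_k ⪯ β·I and (A_k)_{ij} = 0 whenever j ∉ N(i), and set P_N = (I − hA_1)(I − hA_2)⋯(I − hA_N). Then for every natural number r with r ≥ e²·N·h·β, it holds that ‖P_N‖_∞ ≤ √(s_r)·q^N + √d·exp(−r). In particular, taking r_N = ⌈e²·N·h·β + log√d⌉, one has ‖P_N‖_∞ ≤ 2·√(s_{r_N})·q^N. -/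

import Mathlib

/-- Iterated neighborhoods of a node in a graph given by the adjacency relation `Adj`:
`Nk Adj 0 i = {i}`, and `Nk Adj (k+1) i = {j | ∃ ℓ ∈ Nk Adj k i, j ~ ℓ}`.  In particular
`Nk Adj 1 i = N(i)` is the neighborhood of `i`. -/
def Nk {d : ℕ} (Adj : Fin d → Fin d → Prop) : ℕ → Fin d → Set (Fin d)
  | 0, i => {i}
  | k + 1, i => {j | ∃ l ∈ Nk Adj k i, Adj j l}

/-- The sparsity parameter `s_k = maxᵢ |N_k(i)|`. -/
noncomputable def sk {d : ℕ} (Adj : Fin d → Fin d → Prop) (k : ℕ) : ℕ :=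
  ⨆ i, (Nk Adj k i).ncard

/-- The `ℓ∞ → ℓ∞` operator norm of a matrix: the maximum row sum of absolute values. -/
noncomputable def linfOpNorm {d : ℕ} (M : Matrix (Fin d) (Fin d) ℝ) : ℝ :=
  ⨆ i, ∑ j, |M i j|

open Matrix Finset

noncomputable def nu {d : ℕ} (x : Fin d → ℝ) : ℝ := Real.sqrt (∑ j, x j ^ 2)

variable {d : ℕ}

lemma nu_nonneg (x : Fin d → ℝ) : 0 ≤ nu x := Real.sqrt_nonneg _

lemma sum_sq_nonneg' (x : Fin d → ℝ) : 0 ≤ ∑ j, x j ^ 2 :=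
  Finset.sum_nonneg fun _ _ => sq_nonneg _

lemma nu_sq (x : Fin d → ℝ) : nu x ^ 2 = ∑ j, x j ^ 2 :=
  Real.sq_sqrt (sum_sq_nonneg' x)

lemma dot_self_eq (x : Fin d → ℝ) : x ⬝ᵥ x = nu x ^ 2 := by
  rw [nu_sq]; simp [dotProduct, sq]

lemma nu_zero : nu (0 : Fin d → ℝ) = 0 := by simp [nu]

lemma nu_smul (c : ℝ) (x : Fin d → ℝ) : nu (c • x) = |c| * nu x := by
  simp only [nu, Pi.smul_apply, smul_eq_mul, mul_pow, ← Finset.mul_sum]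
  rw [Real.sqrt_mul (sq_nonneg c), Real.sqrt_sq_eq_abs]

lemma dot_le_nu (x y : Fin d → ℝ) : x ⬝ᵥ y ≤ nu x * nu y :=
  Real.sum_mul_le_sqrt_mul_sqrt Finset.univ x y

lemma nu_add_le (x y : Fin d → ℝ) : nu (x + y) ≤ nu x + nu y := by
  have h1 : nu (x + y) ^ 2 ≤ (nu x + nu y) ^ 2 := by
    rw [nu_sq]
    have e : ∑ j, (x + y) j ^ 2 = (∑ j, x j ^ 2) + 2 * (x ⬝ᵥ y) + ∑ j, y j ^ 2 := by
      simp only [Pi.add_apply, dotProduct, Finset.mul_sum, ← Finset.sum_add_distrib]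
      congr 1; ext j; ring
    rw [e, ← nu_sq, ← nu_sq]
    nlinarith [dot_le_nu x y]
  nlinarith [nu_nonneg (x+y), nu_nonneg x, nu_nonneg y]

lemma nu_eq_zero {x : Fin d → ℝ} (hx : nu x = 0) : x = 0 := by
  have : ∑ j, x j ^ 2 = 0 := by
    rw [← nu_sq, hx]; ring
  funext j
  have := (Finset.sum_eq_zero_iff_of_nonneg (fun i _ => sq_nonneg (x i))).1 this j (Finset.mem_univ j)
  exact pow_eq_zero_iff (by norm_num) |>.mp this

lemma quad_nonneg {B : Matrix (Fin d) (Fin d) ℝ} (hB : B.PosSemidef) (x : Fin d → ℝ) :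
    0 ≤ x ⬝ᵥ (B *ᵥ x) := by simpa using hB.dotProduct_mulVec_nonneg x

lemma dot_mulVec_symm {B : Matrix (Fin d) (Fin d) ℝ} (hB : B.IsSymm) (x y : Fin d → ℝ) :
    x ⬝ᵥ (B *ᵥ y) = y ⬝ᵥ (B *ᵥ x) := by
  rw [dotProduct_mulVec, ← mulVec_transpose, hB.eq, dotProduct_comm]

lemma dot_self_nonneg' (x : Fin d → ℝ) : 0 ≤ x ⬝ᵥ x := by
  rw [dot_self_eq]; positivity

lemma mulVec_contract {B : Matrix (Fin d) (Fin d) ℝ} {c : ℝ} (hc : 0 ≤ c)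
    (hsym : B.IsSymm) (h1 : B.PosSemidef)
    (h2 : (c • (1 : Matrix (Fin d) (Fin d) ℝ) - B).PosSemidef)
    (x : Fin d → ℝ) : nu (B *ᵥ x) ≤ c * nu x := by
  have hq : ∀ w, w ⬝ᵥ (B *ᵥ w) ≤ c * (w ⬝ᵥ w) := by
    intro w
    have h := quad_nonneg h2 w
    rw [sub_mulVec, dotProduct_sub, smul_mulVec, one_mulVec, dotProduct_smul,
      smul_eq_mul] at h
    linarith
  have hbil : ∀ u v, u ⬝ᵥ (B *ᵥ v) ≤ c / 2 * (u ⬝ᵥ u + v ⬝ᵥ v) := by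
    intro u v
    have hsy : v ⬝ᵥ (B *ᵥ u) = u ⬝ᵥ (B *ᵥ v) := dot_mulVec_symm hsym v u
    have e1 : (u + v) ⬝ᵥ (B *ᵥ (u + v))
        = u ⬝ᵥ (B *ᵥ u) + 2 * (u ⬝ᵥ (B *ᵥ v)) + v ⬝ᵥ (B *ᵥ v) := by
      rw [mulVec_add, dotProduct_add, add_dotProduct, add_dotProduct]; linarith
    have e2 : (u - v) ⬝ᵥ (B *ᵥ (u - v))
        = u ⬝ᵥ (B *ᵥ u) - 2 * (u ⬝ᵥ (B *ᵥ v)) + v ⬝ᵥ (B *ᵥ v) := by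
      rw [mulVec_sub, dotProduct_sub, sub_dotProduct, sub_dotProduct]; linarith
    have e3 : (u + v) ⬝ᵥ (u + v) = u ⬝ᵥ u + 2 * (u ⬝ᵥ v) + v ⬝ᵥ v := by
      rw [dotProduct_add, add_dotProduct, add_dotProduct, dotProduct_comm v u]; ring
    have e4 : 0 ≤ (u - v) ⬝ᵥ (u - v) := dot_self_nonneg' _
    have e5 : (u - v) ⬝ᵥ (u - v) = u ⬝ᵥ u - 2 * (u ⬝ᵥ v) + v ⬝ᵥ v := by
      rw [dotProduct_sub, sub_dotProduct, sub_dotProduct, dotProduct_comm v u]; ring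
    have h6 := quad_nonneg h1 (u - v)
    have h7 := hq (u + v)
    nlinarith
  set a := nu (B *ᵥ x) with ha
  set b := nu x with hb
  rcases eq_or_lt_of_le (nu_nonneg (B *ᵥ x)) with h0 | h0
  · rw [ha, ← h0]; exact mul_nonneg hc (nu_nonneg x)
  · have hbpos : 0 < b := by
      rcases eq_or_lt_of_le (nu_nonneg x) with hb0 | hb0
      · exfalso
        have hx0 : x = 0 := nu_eq_zero hb0.symm
        rw [hx0] at h0; simp [mulVec_zero, nu_zero] at h0
      · exact hb0
    have key := hbil x ((b / a) • (B *ᵥ x))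
    have L : x ⬝ᵥ (B *ᵥ ((b / a) • (B *ᵥ x))) = b / a * a ^ 2 := by
      rw [mulVec_smul, dotProduct_smul, smul_eq_mul,
        dot_mulVec_symm hsym x (B *ᵥ x), dot_self_eq]
    have R1 : x ⬝ᵥ x = b ^ 2 := dot_self_eq x
    have R2 : ((b / a) • (B *ᵥ x)) ⬝ᵥ ((b / a) • (B *ᵥ x)) = (b / a) ^ 2 * a ^ 2 := by
      rw [dot_self_eq, nu_smul, abs_of_nonneg (by positivity)]; ring
    rw [L, R1, R2] at key
    have e : b / a * a ^ 2 = a * b := by field_simp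
    have e2 : (b / a) ^ 2 * a ^ 2 = b ^ 2 := by have ha0 : a ≠ 0 := h0.ne'; field_simp
    rw [e, e2] at key
    nlinarith

lemma vecMul_contract' {B : Matrix (Fin d) (Fin d) ℝ} {c : ℝ} (hc : 0 ≤ c)
    (hsym : B.IsSymm) (h1 : B.PosSemidef)
    (h2 : (c • (1 : Matrix (Fin d) (Fin d) ℝ) - B).PosSemidef)
    (y : Fin d → ℝ) : nu (y ᵥ* B) ≤ c * nu y := by
  rw [← mulVec_transpose, hsym.eq]
  exact mulVec_contract hc hsym h1 h2 y

lemma vecMul_prod_contract (L : List (Matrix (Fin d) (Fin d) ℝ)) {c : ℝ} (hc : 0 ≤ c)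
    (hL : ∀ B ∈ L, ∀ y, nu (y ᵥ* B) ≤ c * nu y) (y : Fin d → ℝ) :
    nu (y ᵥ* L.prod) ≤ c ^ L.length * nu y := by
  induction L generalizing y with
  | nil => simp [List.prod_nil, vecMul_one]
  | cons B L ih =>
    rw [List.prod_cons, ← vecMul_vecMul]
    calc nu ((y ᵥ* B) ᵥ* L.prod) ≤ c ^ L.length * nu (y ᵥ* B) :=
          ih (fun B' h' => hL B' (List.mem_cons_of_mem _ h')) _
    _ ≤ c ^ L.length * (c * nu y) :=
          mul_le_mul_of_nonneg_left (hL B List.mem_cons_self y) (pow_nonneg hc _)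
    _ = c ^ (B :: L).length * nu y := by rw [List.length_cons]; ring

lemma mem_Nk_self {Adj : Fin d → Fin d → Prop} (hrefl : ∀ i, Adj i i) (r : ℕ) (i : Fin d) :
    i ∈ Nk Adj r i := by
  induction r with
  | zero => exact rfl
  | succ r ih => exact ⟨i, ih, hrefl i⟩

lemma mem_Nk_add {Adj : Fin d → Fin d → Prop} (b a : ℕ) (i j : Fin d) :
    j ∈ Nk Adj (b + a) i ↔ ∃ l ∈ Nk Adj b i, j ∈ Nk Adj a l := by
  induction a generalizing j with
  | zero => simp [Nk]
  | succ a ih =>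
    show j ∈ Nk Adj (b + a + 1) i ↔ _
    simp only [Nk, Set.mem_setOf_eq, ih]
    constructor
    · rintro ⟨m, ⟨l, hl, hm⟩, hadj⟩
      exact ⟨l, hl, m, hm, hadj⟩
    · rintro ⟨l, hl, m, hm, hadj⟩
      exact ⟨m, ⟨l, hl, hm⟩, hadj⟩

noncomputable def Etail (t : ℝ) (n r : ℕ) : ℝ := ∑ m ∈ Finset.Ioc r n, (n.choose m : ℝ) * t ^ m

lemma Etail_nonneg {t : ℝ} (ht : 0 ≤ t) (n r : ℕ) : 0 ≤ Etail t n r :=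
  Finset.sum_nonneg fun m _ => mul_nonneg (Nat.cast_nonneg _) (pow_nonneg ht _)

lemma Etail_zero_n (t : ℝ) (r : ℕ) : Etail t 0 r = 0 := by
  simp [Etail, Finset.Ioc_eq_empty_of_le (Nat.zero_le r)]

lemma Ioc_eq_Icc_succ (r n : ℕ) : Finset.Ioc r n = Finset.Icc (r + 1) n := by
  ext m; simp only [Finset.mem_Ioc, Finset.mem_Icc]; omega

lemma Ioc_succ_map (r n : ℕ) :
    Finset.Ioc r (n + 1) = Finset.map (addRightEmbedding 1) (Finset.Icc r n) := by
  rw [Finset.map_add_right_Icc, Ioc_eq_Icc_succ]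

lemma sum_Ioc_choose (t : ℝ) (n r : ℕ) :
    ∑ m ∈ Finset.Ioc r (n + 1), (n.choose m : ℝ) * t ^ m = Etail t n r := by
  rw [Etail]
  refine (Finset.sum_subset (Finset.Ioc_subset_Ioc_right (Nat.le_succ n)) ?_).symm
  intro m hm hm'
  have : m = n + 1 := by
    simp only [Finset.mem_Ioc] at hm hm'; omega
  rw [this, Nat.choose_succ_self, Nat.cast_zero, zero_mul]

lemma Etail_succ_succ (t : ℝ) (n r : ℕ) :
    Etail t (n + 1) (r + 1) = Etail t n (r + 1) + t * Etail t n r := by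
  have h1 : Finset.Ioc (r + 1) (n + 1) = Finset.map (addRightEmbedding 1) (Finset.Ioc r n) := by
    rw [Ioc_succ_map, Ioc_eq_Icc_succ]
  rw [Etail, h1, Finset.sum_map]
  simp only [addRightEmbedding_apply]
  have h2 : ∀ m ∈ Finset.Ioc r n, ((n + 1).choose (m + 1) : ℝ) * t ^ (m + 1)
      = (n.choose (m + 1) : ℝ) * t ^ (m + 1) + t * ((n.choose m : ℝ) * t ^ m) := by
    intro m _
    rw [Nat.choose_succ_succ]
    push_cast; ring
  rw [Finset.sum_congr rfl h2, Finset.sum_add_distrib, ← Finset.mul_sum]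
  congr 1
  rw [← sum_Ioc_choose t n (r + 1), h1, Finset.sum_map]
  simp only [addRightEmbedding_apply]

lemma Etail_succ_zero (t : ℝ) (n : ℕ) :
    Etail t (n + 1) 0 = Etail t n 0 + t * (1 + t) ^ n := by
  rw [Etail, Ioc_succ_map, Finset.sum_map]
  simp only [addRightEmbedding_apply]
  have h2 : ∀ m ∈ Finset.Icc 0 n, ((n + 1).choose (m + 1) : ℝ) * t ^ (m + 1)
      = (n.choose (m + 1) : ℝ) * t ^ (m + 1) + t * ((n.choose m : ℝ) * t ^ m) := by
    intro m _
    rw [Nat.choose_succ_succ]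
    push_cast; ring
  rw [Finset.sum_congr rfl h2, Finset.sum_add_distrib, ← Finset.mul_sum]
  congr 1
  · rw [← sum_Ioc_choose t n 0, Ioc_succ_map, Finset.sum_map]
    simp only [addRightEmbedding_apply]
  · congr 1
    have : Finset.Icc 0 n = Finset.range (n + 1) := by
      ext m; simp only [Finset.mem_Icc, Finset.mem_range]; omega
    rw [this, add_comm 1 t, add_pow]
    apply Finset.sum_congr rfl
    intro m hm; simp; ring

lemma Etail_le_exp {t : ℝ} (ht : 0 < t) (n : ℕ) {r : ℕ}
    (hr : Real.exp 1 ^ 2 * n * t ≤ r) :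
    Etail t n r ≤ Real.exp (-(r : ℝ)) := by
  have hE : Real.exp (-1) < 1 := by
    rw [Real.exp_lt_one_iff]; norm_num
  have he1 : (0:ℝ) < Real.exp 1 := Real.exp_pos 1
  have h1 : Etail t n r ≤ ∑ m ∈ Finset.Ioc r n, Real.exp (-1) ^ m := by
    apply Finset.sum_le_sum
    intro m hm
    obtain ⟨hrm, hmn⟩ := Finset.mem_Ioc.mp hm
    have hmpos : (0:ℝ) < m := by
      have : 1 ≤ m := by omega
      exact_mod_cast Nat.lt_of_lt_of_le Nat.zero_lt_one this |>.trans_le le_rfl |> fun h => h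
    have hc : (n.choose m : ℝ) ≤ (n:ℝ)^m / m.factorial := Nat.choose_le_pow_div m n
    have hfacpos : (0:ℝ) < m.factorial := by exact_mod_cast m.factorial_pos
    have hfac : (m:ℝ)^m ≤ Real.exp 1 ^ m * m.factorial := by
      have hstep : (m:ℝ)^m / m.factorial ≤ Real.exp m := by
        calc (m:ℝ)^m / m.factorial
            ≤ ∑ i ∈ Finset.range (m+1), (m:ℝ)^i / i.factorial := by
              exact Finset.single_le_sum (f := fun i => (m:ℝ)^i / i.factorial)
                (fun i _ => by positivity) (Finset.self_mem_range_succ m)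
        _ ≤ Real.exp m := Real.sum_le_exp_of_nonneg (by positivity) _
      rw [div_le_iff₀ hfacpos] at hstep
      calc (m:ℝ)^m ≤ Real.exp m * m.factorial := hstep
      _ = Real.exp 1 ^ m * m.factorial := by rw [← Real.exp_one_pow]
    have hrm' : (r:ℝ) < m := by exact_mod_cast hrm
    have hm2 : Real.exp 1 ^ 2 * n * t ≤ (m:ℝ) := hr.trans hrm'.le
    have hbase0 : (0:ℝ) ≤ (n:ℝ) * t * Real.exp 1 / m := by positivity
    have hbase : (n:ℝ) * t * Real.exp 1 / m ≤ Real.exp (-1) := by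
      rw [Real.exp_neg, div_le_iff₀ hmpos]
      rw [inv_mul_eq_div, le_div_iff₀ he1]
      nlinarith
    calc (n.choose m : ℝ) * t ^ m
        ≤ ((n:ℝ)^m / m.factorial) * t ^ m :=
          mul_le_mul_of_nonneg_right hc (pow_nonneg ht.le m)
    _ = ((n:ℝ) * t)^m / m.factorial := by rw [mul_pow]; ring
    _ ≤ ((n:ℝ) * t * Real.exp 1 / m)^m := by
        rw [div_pow, div_le_div_iff₀ hfacpos (pow_pos hmpos m)]
        calc ((n:ℝ)*t)^m * (m:ℝ)^m ≤ ((n:ℝ)*t)^m * (Real.exp 1 ^ m * m.factorial) :=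
              mul_le_mul_of_nonneg_left hfac (by positivity)
        _ = ((n:ℝ)*t*Real.exp 1)^m * m.factorial := by rw [mul_pow ((n:ℝ)*t)]; ring
    _ ≤ Real.exp (-1) ^ m := pow_le_pow_left₀ hbase0 hbase m
  have h2 : ∑ m ∈ Finset.Ioc r n, Real.exp (-1) ^ m
      ≤ Real.exp (-1)^(r+1) / (1 - Real.exp (-1)) := by
    have hio : Finset.Ioc r n = Finset.Ico (r+1) (n+1) := by
      ext m; simp only [Finset.mem_Ioc, Finset.mem_Ico]; omega
    rw [hio]
    exact geom_sum_Ico_le_of_lt_one (Real.exp_pos _).le hE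
  have h3 : Real.exp (-1)^(r+1) / (1 - Real.exp (-1)) ≤ Real.exp (-(r:ℝ)) := by
    have e2 : Real.exp (-1:ℝ)^(r+1) = Real.exp (-(r:ℝ)) * Real.exp (-1) := by
      rw [← Real.exp_nat_mul, ← Real.exp_add]
      push_cast; ring_nf
    have hpos : 0 < 1 - Real.exp (-1) := by linarith
    rw [e2, div_le_iff₀ hpos]
    have h2e : 2 * Real.exp (-1) ≤ 1 := by
      rw [Real.exp_neg]
      have h9 := Real.exp_one_gt_d9
      have h2le : (2:ℝ) ≤ Real.exp 1 := by nlinarith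
      calc 2 * (Real.exp 1)⁻¹ ≤ Real.exp 1 * (Real.exp 1)⁻¹ :=
            mul_le_mul_of_nonneg_right h2le (by positivity)
      _ = 1 := mul_inv_cancel₀ he1.ne'
    nlinarith [Real.exp_pos (-(r:ℝ))]
  exact h1.trans (h2.trans h3)

lemma vecMul_smulMat (c : ℝ) (Mx : Matrix (Fin d) (Fin d) ℝ) (y : Fin d → ℝ) :
    y ᵥ* (c • Mx) = c • (y ᵥ* Mx) := by
  ext j
  simp only [Matrix.vecMul, dotProduct, Matrix.smul_apply, smul_eq_mul,
    Pi.smul_apply, Finset.mul_sum]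
  exact Finset.sum_congr rfl fun i _ => by ring

lemma decomp {Adj : Fin d → Fin d → Prop} (hrefl : ∀ i, Adj i i)
    {c₀ t : ℝ} (hc₀ : 0 ≤ c₀) (hc₀1 : c₀ ≤ 1) (ht : 0 ≤ t)
    (LD : List (Matrix (Fin d) (Fin d) ℝ))
    (hsp : ∀ D ∈ LD, ∀ i j, j ∉ Nk Adj 1 i → D i j = 0)
    (hDn : ∀ D ∈ LD, ∀ y, nu (y ᵥ* D) ≤ t * nu y)
    (hB : ∀ D ∈ LD, ∀ y : Fin d → ℝ,
      nu (y ᵥ* (c₀ • (1 : Matrix (Fin d) (Fin d) ℝ) + D)) ≤ nu y)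
    (r : ℕ) :
    ∃ Q R : Matrix (Fin d) (Fin d) ℝ,
      (LD.map (fun D => c₀ • (1 : Matrix (Fin d) (Fin d) ℝ) + D)).prod = Q + R ∧
      (∀ i j, j ∉ Nk Adj r i → Q i j = 0) ∧
      (∀ y, nu (y ᵥ* R) ≤ Etail t LD.length r * nu y) := by
  induction LD generalizing r with
  | nil =>
    refine ⟨1, 0, by simp, ?_, ?_⟩
    · intro i j hj
      rw [Matrix.one_apply]
      rw [if_neg]
      intro hij
      exact hj (hij ▸ mem_Nk_self hrefl r i)
    · intro y
      rw [Matrix.vecMul_zero, nu_zero]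
      exact mul_nonneg (Etail_nonneg ht _ _) (nu_nonneg y)
  | cons D LD ih =>
    have hsp' := fun D' h' => hsp D' (List.mem_cons_of_mem _ h')
    have hDn' := fun D' h' => hDn D' (List.mem_cons_of_mem _ h')
    have hB' := fun D' h' => hB D' (List.mem_cons_of_mem _ h')
    have hDmem := List.mem_cons_self (a := D) (l := LD)
    have hBprod : ∀ y : Fin d → ℝ,
        nu (y ᵥ* (LD.map (fun D => c₀ • (1 : Matrix (Fin d) (Fin d) ℝ) + D)).prod) ≤ nu y := by
      intro y
      have := vecMul_prod_contract
        (LD.map (fun D => c₀ • (1 : Matrix (Fin d) (Fin d) ℝ) + D)) zero_le_one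
        (fun B hBm y' => by
          obtain ⟨D', hD', rfl⟩ := List.mem_map.mp hBm
          rw [one_mul]
          exact hB' D' hD' y') y
      simpa using this
    set f : Matrix (Fin d) (Fin d) ℝ → Matrix (Fin d) (Fin d) ℝ :=
      fun D => c₀ • (1 : Matrix (Fin d) (Fin d) ℝ) + D with hf
    set M : Matrix (Fin d) (Fin d) ℝ := (LD.map f).prod with hM
    have hprod : ((D :: LD).map f).prod = c₀ • M + D * M := by
      rw [List.map_cons, List.prod_cons, add_mul, smul_mul_assoc, one_mul]
    set n := LD.length with hn
    have hlen : ((D :: LD).length) = n + 1 := rfl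
    cases r with
    | zero =>
      obtain ⟨Q1, R1, hQR1, hQ1, hR1⟩ := ih hsp' hDn' hB' 0
      refine ⟨c₀ • Q1, c₀ • R1 + D * M, ?_, ?_, ?_⟩
      · rw [hprod, hQR1, smul_add]
        abel
      · intro i j hj
        rw [Matrix.smul_apply, hQ1 i j hj, smul_zero]
      · intro y
        rw [hlen]
        have split : nu (y ᵥ* (c₀ • R1 + D * M))
            ≤ nu (y ᵥ* (c₀ • R1)) + nu (y ᵥ* (D * M)) := by
          rw [Matrix.vecMul_add]
          exact nu_add_le _ _
        have b1 : nu (y ᵥ* (c₀ • R1)) ≤ c₀ * (Etail t n 0 * nu y) := by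
          rw [vecMul_smulMat, nu_smul, abs_of_nonneg hc₀]
          exact mul_le_mul_of_nonneg_left (hR1 y) hc₀
        have b2 : nu (y ᵥ* (D * M)) ≤ t * nu y := by
          rw [← Matrix.vecMul_vecMul]
          exact (hBprod (y ᵥ* D)).trans (hDn D hDmem y)
        have hrec := Etail_succ_zero t n
        have hp : (1 : ℝ) ≤ (1 + t) ^ n := one_le_pow₀ (by linarith)
        have k1 : 0 ≤ (1 - c₀) * (Etail t n 0 * nu y) :=
          mul_nonneg (by linarith) (mul_nonneg (Etail_nonneg ht _ _) (nu_nonneg y))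
        have k2 : t * nu y ≤ t * (1 + t) ^ n * nu y := by
          have := mul_le_mul_of_nonneg_right
            (mul_le_mul_of_nonneg_left hp ht) (nu_nonneg y)
          calc t * nu y = t * 1 * nu y := by ring
          _ ≤ t * (1 + t) ^ n * nu y := this
        calc nu (y ᵥ* (c₀ • R1 + D * M)) ≤ c₀ * (Etail t n 0 * nu y) + t * nu y := by
              linarith [split, b1, b2]
        _ ≤ Etail t (n + 1) 0 * nu y := by rw [hrec]; ring_nf; nlinarith [k1, k2]
    | succ r =>
      obtain ⟨Q1, R1, hQR1, hQ1, hR1⟩ := ih hsp' hDn' hB' (r + 1)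
      obtain ⟨Q2, R2, hQR2, hQ2, hR2⟩ := ih hsp' hDn' hB' r
      refine ⟨c₀ • Q1 + D * Q2, c₀ • R1 + D * R2, ?_, ?_, ?_⟩
      · calc ((D :: LD).map f).prod = c₀ • M + D * M := hprod
        _ = c₀ • (Q1 + R1) + D * (Q2 + R2) := by rw [← hQR1, ← hQR2]
        _ = c₀ • Q1 + D * Q2 + (c₀ • R1 + D * R2) := by
            rw [smul_add, mul_add]; abel
      · intro i j hj
        rw [Matrix.add_apply, Matrix.smul_apply, hQ1 i j hj, smul_zero, zero_add,
          Matrix.mul_apply]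
        apply Finset.sum_eq_zero
        intro l _
        by_cases hl : l ∈ Nk Adj 1 i
        · have hjl : j ∉ Nk Adj r l := by
            intro hmem
            apply hj
            have : j ∈ Nk Adj (1 + r) i := (mem_Nk_add 1 r i j).mpr ⟨l, hl, hmem⟩
            rwa [Nat.add_comm] at this
          rw [hQ2 l j hjl, mul_zero]
        · rw [hsp D hDmem i l hl, zero_mul]
      · intro y
        rw [hlen]
        have split : nu (y ᵥ* (c₀ • R1 + D * R2))
            ≤ nu (y ᵥ* (c₀ • R1)) + nu (y ᵥ* (D * R2)) := by
          rw [Matrix.vecMul_add]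
          exact nu_add_le _ _
        have b1 : nu (y ᵥ* (c₀ • R1)) ≤ c₀ * (Etail t n (r + 1) * nu y) := by
          rw [vecMul_smulMat, nu_smul, abs_of_nonneg hc₀]
          exact mul_le_mul_of_nonneg_left (hR1 y) hc₀
        have b2 : nu (y ᵥ* (D * R2)) ≤ Etail t n r * (t * nu y) := by
          rw [← Matrix.vecMul_vecMul]
          exact (hR2 (y ᵥ* D)).trans
            (mul_le_mul_of_nonneg_left (hDn D hDmem y) (Etail_nonneg ht _ _))
        have hrec := Etail_succ_succ t n r
        have k1 : 0 ≤ (1 - c₀) * (Etail t n (r + 1) * nu y) :=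
          mul_nonneg (by linarith) (mul_nonneg (Etail_nonneg ht _ _) (nu_nonneg y))
        calc nu (y ᵥ* (c₀ • R1 + D * R2))
            ≤ c₀ * (Etail t n (r + 1) * nu y) + Etail t n r * (t * nu y) := by
              linarith [split, b1, b2]
        _ ≤ Etail t (n + 1) (r + 1) * nu y := by rw [hrec]; nlinarith [k1]

lemma nu_single (i : Fin d) : nu (Pi.single i 1 : Fin d → ℝ) = 1 := by
  rw [nu]
  have : ∑ j, (Pi.single i 1 : Fin d → ℝ) j ^ 2 = 1 := by
    rw [Finset.sum_eq_single i]
    · simp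
    · intro b _ hb; rw [Pi.single_eq_of_ne hb]; ring
    · intro hi; exact absurd (Finset.mem_univ i) hi
  rw [this, Real.sqrt_one]

lemma sum_abs_le (S : Finset (Fin d)) (x : Fin d → ℝ) :
    ∑ j ∈ S, |x j| ≤ Real.sqrt S.card * nu x := by
  calc ∑ j ∈ S, |x j| = ∑ j ∈ S, 1 * |x j| := by simp
  _ ≤ Real.sqrt (∑ j ∈ S, 1 ^ 2) * Real.sqrt (∑ j ∈ S, |x j| ^ 2) :=
      Real.sum_mul_le_sqrt_mul_sqrt S 1 (fun j => |x j|)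
  _ ≤ Real.sqrt S.card * nu x := by
      apply mul_le_mul
      · rw [Finset.sum_congr rfl fun j _ => one_pow 2, Finset.sum_const]; simp
      · rw [nu]
        apply Real.sqrt_le_sqrt
        calc ∑ j ∈ S, |x j| ^ 2 = ∑ j ∈ S, x j ^ 2 := by
              exact Finset.sum_congr rfl fun j _ => sq_abs (x j)
        _ ≤ ∑ j, x j ^ 2 := Finset.sum_le_sum_of_subset_of_nonneg (Finset.subset_univ S)
              (fun j _ _ => sq_nonneg _)
      · exact Real.sqrt_nonneg _
      · exact Real.sqrt_nonneg _

lemma PosSemidef.smul_real {M : Matrix (Fin d) (Fin d) ℝ} (hM : M.PosSemidef) {c : ℝ}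
    (hc : 0 ≤ c) : (c • M).PosSemidef := by
  refine Matrix.PosSemidef.of_dotProduct_mulVec_nonneg ?_ ?_
  · rw [Matrix.IsHermitian, Matrix.conjTranspose_smul, hM.1.eq, star_trivial]
  · intro x
    have h0 := hM.dotProduct_mulVec_nonneg x
    rw [smul_mulVec, dotProduct_smul, smul_eq_mul]
    exact mul_nonneg hc h0


set_option maxHeartbeats 1000000 in
/-- `ℓ∞` operator-norm bound on the propagator `P_N = (I - hA_1) ⋯ (I - hA_N)` of the
unadjusted Langevin algorithm with a sparse potential: for any `r ≥ e² N h β`,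
`‖P_N‖_∞ ≤ √(s_r) q^N + √d exp(-r)`, and with `r_N = ⌈e² N h β + log √d⌉`,
`‖P_N‖_∞ ≤ 2 √(s_{r_N}) q^N`. -/
theorem statement9
    (d N : ℕ) (hd : 0 < d)
    (α β h : ℝ) (hα : 0 < α) (hαβ : α ≤ β) (hh0 : 0 < h) (hh : h ≤ 1 / β)
    (q : ℝ) (hq : q = Real.exp (-(h * α)))
    (Adj : Fin d → Fin d → Prop)
    (hsymm : ∀ i j, Adj i j → Adj j i) (hrefl : ∀ i, Adj i i)
    (A : Fin N → Matrix (Fin d) (Fin d) ℝ)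
    (hAsymm : ∀ k, (A k).IsSymm)
    (hAlow : ∀ k, (A k - α • 1).PosSemidef)
    (hAhigh : ∀ k, ((β • 1 : Matrix (Fin d) (Fin d) ℝ) - A k).PosSemidef)
    (hAsparse : ∀ k i j, j ∉ Nk Adj 1 i → A k i j = 0)
    (P : Matrix (Fin d) (Fin d) ℝ)
    (hP : P = (List.ofFn fun k => (1 : Matrix (Fin d) (Fin d) ℝ) - h • A k).prod)
    (rN : ℕ) (hrN : rN = ⌈Real.exp 1 ^ 2 * N * h * β + Real.log (Real.sqrt d)⌉₊) :
    (∀ r : ℕ, Real.exp 1 ^ 2 * N * h * β ≤ r →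
      linfOpNorm P ≤ Real.sqrt (sk Adj r) * q ^ N + Real.sqrt d * Real.exp (-(r : ℝ))) ∧
    linfOpNorm P ≤ 2 * Real.sqrt (sk Adj rN) * q ^ N := by
  haveI : Nonempty (Fin d) := Fin.pos_iff_nonempty.mp hd
  have hβ : 0 < β := lt_of_lt_of_le hα hαβ
  have ht : 0 < h * β := mul_pos hh0 hβ
  have hhβ1 : h * β ≤ 1 := by
    calc h * β ≤ (1 / β) * β := mul_le_mul_of_nonneg_right hh hβ.le
    _ = 1 := by field_simp
  set t := h * β with htdef
  set c₀ := 1 - h * β with hc₀def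
  have hc₀ : 0 ≤ c₀ := by simp only [hc₀def]; linarith
  have hc₀1 : c₀ ≤ 1 := by simp only [hc₀def]; linarith
  set c1 := 1 - h * α with hc1def
  have hhα : 0 < h * α := mul_pos hh0 hα
  have hhαβ : h * α ≤ h * β := by nlinarith
  have hc1 : 0 ≤ c1 := by simp only [hc1def]; linarith
  have hc1q : c1 ≤ q := by
    rw [hq]; simp only [hc1def]
    linarith [Real.add_one_le_exp (-(h * α))]
  have hq0 : 0 ≤ q := by rw [hq]; exact (Real.exp_pos _).le
  -- the matrices D k
  set D : Fin N → Matrix (Fin d) (Fin d) ℝ := fun k => h • (β • 1 - A k) with hD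
  have hBeq : ∀ k, c₀ • (1 : Matrix (Fin d) (Fin d) ℝ) + D k = 1 - h • A k := by
    intro k
    simp only [hD, hc₀def]
    module
  have hDsymm : ∀ k, (D k).IsSymm := by
    intro k
    simp only [hD]
    rw [Matrix.IsSymm, Matrix.transpose_smul, Matrix.transpose_sub, Matrix.transpose_smul,
      Matrix.transpose_one, (hAsymm k).eq]
  have hBsymm : ∀ k, ((1 : Matrix (Fin d) (Fin d) ℝ) - h • A k).IsSymm := by
    intro k
    rw [Matrix.IsSymm, Matrix.transpose_sub, Matrix.transpose_smul, Matrix.transpose_one,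
      (hAsymm k).eq]
  have hAPSD : ∀ k, (A k).PosSemidef := by
    intro k
    have h1 := (hAlow k).add (PosSemidef.smul_real Matrix.PosSemidef.one hα.le)
    rwa [sub_add_cancel] at h1
  have hDPSD : ∀ k, (D k).PosSemidef := fun k => PosSemidef.smul_real (hAhigh k) hh0.le
  have hDup : ∀ k, ((h * β) • (1 : Matrix (Fin d) (Fin d) ℝ) - D k).PosSemidef := by
    intro k
    have e : (h * β) • (1 : Matrix (Fin d) (Fin d) ℝ) - D k = h • A k := by
      simp only [hD]; module
    rw [e]
    exact PosSemidef.smul_real (hAPSD k) hh0.le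
  have hBPSD : ∀ k, ((1 : Matrix (Fin d) (Fin d) ℝ) - h • A k).PosSemidef := by
    intro k
    rw [← hBeq k]
    exact (PosSemidef.smul_real Matrix.PosSemidef.one hc₀).add (hDPSD k)
  have hBup1 : ∀ k, ((1:ℝ) • (1 : Matrix (Fin d) (Fin d) ℝ)
      - ((1 : Matrix (Fin d) (Fin d) ℝ) - h • A k)).PosSemidef := by
    intro k
    have e : (1:ℝ) • (1 : Matrix (Fin d) (Fin d) ℝ)
        - ((1 : Matrix (Fin d) (Fin d) ℝ) - h • A k) = h • A k := by module
    rw [e]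
    exact PosSemidef.smul_real (hAPSD k) hh0.le
  have hBupc1 : ∀ k, (c1 • (1 : Matrix (Fin d) (Fin d) ℝ)
      - ((1 : Matrix (Fin d) (Fin d) ℝ) - h • A k)).PosSemidef := by
    intro k
    have e : c1 • (1 : Matrix (Fin d) (Fin d) ℝ)
        - ((1 : Matrix (Fin d) (Fin d) ℝ) - h • A k) = h • (A k - α • 1) := by
      simp only [hc1def]; module
    rw [e]
    exact PosSemidef.smul_real (hAlow k) hh0.le
  set LD := List.ofFn D with hLD
  have hlen : LD.length = N := List.length_ofFn (f := D)
  have hPLD : P = (LD.map (fun Dm => c₀ • (1 : Matrix (Fin d) (Fin d) ℝ) + Dm)).prod := by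
    rw [hP, hLD, List.map_ofFn]
    exact congrArg List.prod (congrArg List.ofFn (funext fun k => (hBeq k).symm))
  have hDn : ∀ Dm ∈ LD, ∀ y, nu (y ᵥ* Dm) ≤ t * nu y := by
    intro Dm hm y
    rw [hLD, List.mem_ofFn] at hm
    obtain ⟨k, rfl⟩ := hm
    exact vecMul_contract' ht.le (hDsymm k) (hDPSD k) (hDup k) y
  have hB1 : ∀ Dm ∈ LD, ∀ y : Fin d → ℝ,
      nu (y ᵥ* (c₀ • (1 : Matrix (Fin d) (Fin d) ℝ) + Dm)) ≤ nu y := by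
    intro Dm hm y
    rw [hLD, List.mem_ofFn] at hm
    obtain ⟨k, rfl⟩ := hm
    rw [hBeq k]
    have := vecMul_contract' zero_le_one (hBsymm k) (hBPSD k) (hBup1 k) y
    simpa using this
  have hsp : ∀ Dm ∈ LD, ∀ i j, j ∉ Nk Adj 1 i → Dm i j = 0 := by
    intro Dm hm i j hj
    rw [hLD, List.mem_ofFn] at hm
    obtain ⟨k, rfl⟩ := hm
    have hji : j ≠ i := by
      intro hji
      exact hj (hji ▸ mem_Nk_self hrefl 1 i)
    have h1 : (1 : Matrix (Fin d) (Fin d) ℝ) i j = 0 := Matrix.one_apply_ne (Ne.symm hji)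
    simp only [hD, Matrix.smul_apply, Matrix.sub_apply, hAsparse k i j hj, h1,
      smul_eq_mul, mul_zero, sub_zero]
  have hPfull : ∀ y, nu (y ᵥ* P) ≤ c1 ^ N * nu y := by
    intro y
    rw [hP]
    have := vecMul_prod_contract (List.ofFn fun k => (1 : Matrix (Fin d) (Fin d) ℝ) - h • A k)
      hc1 (fun B hBm y' => by
        rw [List.mem_ofFn] at hBm
        obtain ⟨k, rfl⟩ := hBm
        exact vecMul_contract' hc1 (hBsymm k) (hBPSD k) (hBupc1 k) y') y
    simpa [List.length_ofFn] using this
  have hrow : ∀ r : ℕ, Real.exp 1 ^ 2 * N * h * β ≤ r →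
      linfOpNorm P ≤ Real.sqrt (sk Adj r) * q ^ N + Real.sqrt d * Real.exp (-(r : ℝ)) := by
    intro r hr
    obtain ⟨Q, R, hQR, hQ, hR⟩ := decomp hrefl hc₀ hc₀1 ht.le LD hsp hDn hB1 r
    rw [← hPLD] at hQR
    apply ciSup_le
    intro i
    set Sf := (Nk Adj r i).toFinite.toFinset with hSf
    have hsplit : ∑ j, |P i j| = ∑ j ∈ Sf, |P i j| + ∑ j ∈ Sfᶜ, |P i j| :=
      (Finset.sum_add_sum_compl Sf _).symm
    have hrownu : nu (P i) ≤ c1 ^ N := by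
      have h2 := hPfull (Pi.single i 1)
      rwa [Matrix.single_one_vecMul, nu_single, mul_one] at h2
    have hcard : (Sf.card : ℝ) ≤ (sk Adj r : ℝ) := by
      have e1 : Sf.card = (Nk Adj r i).ncard := (Set.ncard_eq_toFinset_card _ _).symm
      have e2 : (Nk Adj r i).ncard ≤ sk Adj r :=
        le_ciSup (Finite.bddAbove_range fun i => (Nk Adj r i).ncard) i
      exact_mod_cast e1 ▸ e2
    have hb1 : ∑ j ∈ Sf, |P i j| ≤ Real.sqrt (sk Adj r) * q ^ N := by
      calc ∑ j ∈ Sf, |P i j| ≤ Real.sqrt Sf.card * nu (P i) := sum_abs_le Sf (P i)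
      _ ≤ Real.sqrt (sk Adj r) * q ^ N := by
          apply mul_le_mul (Real.sqrt_le_sqrt hcard)
            (hrownu.trans (pow_le_pow_left₀ hc1 hc1q N)) (nu_nonneg _) (Real.sqrt_nonneg _)
    have hrownuR : nu (R i) ≤ Etail t N r := by
      have h2 := hR (Pi.single i 1)
      rwa [Matrix.single_one_vecMul, nu_single, mul_one, hlen] at h2
    have hEr : Etail t N r ≤ Real.exp (-(r : ℝ)) := by
      apply Etail_le_exp ht N
      calc Real.exp 1 ^ 2 * (N:ℝ) * t = Real.exp 1 ^ 2 * N * h * β := by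
            rw [htdef]; ring
      _ ≤ (r:ℝ) := hr
    have hb2 : ∑ j ∈ Sfᶜ, |P i j| ≤ Real.sqrt d * Real.exp (-(r : ℝ)) := by
      have hPR : ∀ j ∈ Sfᶜ, |P i j| = |R i j| := by
        intro j hjc
        have hj : j ∉ Nk Adj r i := by
          rw [Finset.mem_compl, hSf, Set.Finite.mem_toFinset] at hjc
          exact hjc
        rw [hQR, Matrix.add_apply, hQ i j hj, zero_add]
      calc ∑ j ∈ Sfᶜ, |P i j| = ∑ j ∈ Sfᶜ, |R i j| := Finset.sum_congr rfl hPR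
      _ ≤ ∑ j, |R i j| := Finset.sum_le_sum_of_subset_of_nonneg (Finset.subset_univ _)
            (fun j _ _ => abs_nonneg _)
      _ ≤ Real.sqrt (Finset.univ : Finset (Fin d)).card * nu (R i) := sum_abs_le _ _
      _ ≤ Real.sqrt d * Real.exp (-(r : ℝ)) := by
          rw [Finset.card_univ, Fintype.card_fin]
          exact mul_le_mul le_rfl (hrownuR.trans hEr) (nu_nonneg _) (Real.sqrt_nonneg _)
    calc ∑ j, |P i j| = ∑ j ∈ Sf, |P i j| + ∑ j ∈ Sfᶜ, |P i j| := hsplit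
    _ ≤ Real.sqrt (sk Adj r) * q ^ N + Real.sqrt d * Real.exp (-(r : ℝ)) := add_le_add hb1 hb2
  refine ⟨hrow, ?_⟩
  have hd1 : (1 : ℝ) ≤ d := by exact_mod_cast hd
  have hlog : 0 ≤ Real.log (Real.sqrt d) := Real.log_nonneg (Real.one_le_sqrt.mpr hd1)
  have hceil : Real.exp 1 ^ 2 * N * h * β + Real.log (Real.sqrt d) ≤ rN := by
    rw [hrN]; exact Nat.le_ceil _
  have hrNge : Real.exp 1 ^ 2 * N * h * β ≤ rN := by linarith
  have h1 := hrow rN hrNge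
  have hsqd : (0:ℝ) < Real.sqrt d := Real.sqrt_pos.mpr (by linarith)
  have hsk1 : (1 : ℝ) ≤ Real.sqrt (sk Adj rN) := by
    rw [Real.one_le_sqrt]
    have hpos : 0 < (Nk Adj rN (Classical.arbitrary (Fin d))).ncard := by
      rw [Set.ncard_pos (Set.toFinite _)]
      exact ⟨_, mem_Nk_self hrefl rN _⟩
    have := le_ciSup (Finite.bddAbove_range fun i => (Nk Adj rN i).ncard)
      (Classical.arbitrary (Fin d))
    have h2 : 1 ≤ sk Adj rN := le_trans hpos this
    exact_mod_cast h2
  have key : Real.sqrt d * Real.exp (-(rN : ℝ)) ≤ Real.sqrt (sk Adj rN) * q ^ N := by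
    have h3 : Real.exp (-(rN : ℝ))
        ≤ Real.exp (-(Real.exp 1 ^ 2 * N * h * β + Real.log (Real.sqrt d))) :=
      Real.exp_le_exp.mpr (by linarith)
    have h4 : Real.exp (-(Real.exp 1 ^ 2 * N * h * β + Real.log (Real.sqrt d)))
        = Real.exp (-(Real.exp 1 ^ 2 * N * h * β)) / Real.sqrt d := by
      rw [neg_add, Real.exp_add, Real.exp_neg (Real.log (Real.sqrt d)), Real.exp_log hsqd]
      ring
    have h5 : Real.exp (-(Real.exp 1 ^ 2 * N * h * β)) ≤ q ^ N := by
      have hqN : q ^ N = Real.exp ((N:ℝ) * -(h * α)) := by rw [hq, ← Real.exp_nat_mul]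
      rw [hqN]
      apply Real.exp_le_exp.mpr
      have he2 : (1:ℝ) ≤ Real.exp 1 ^ 2 := by nlinarith [Real.exp_one_gt_d9]
      have hNnn : (0:ℝ) ≤ (N:ℝ) := Nat.cast_nonneg N
      have s1 : (N:ℝ) * (h * α) ≤ (N:ℝ) * (h * β) := mul_le_mul_of_nonneg_left hhαβ hNnn
      have s2 : (N:ℝ) * (h * β) ≤ Real.exp 1 ^ 2 * ((N:ℝ) * (h * β)) :=
        le_mul_of_one_le_left (by positivity) he2
      nlinarith [s1, s2]
    calc Real.sqrt d * Real.exp (-(rN : ℝ))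
        ≤ Real.sqrt d * (Real.exp (-(Real.exp 1 ^ 2 * N * h * β)) / Real.sqrt d) := by
          rw [← h4]
          exact mul_le_mul_of_nonneg_left h3 hsqd.le
    _ = Real.exp (-(Real.exp 1 ^ 2 * N * h * β)) := by field_simp
    _ ≤ q ^ N := h5
    _ ≤ Real.sqrt (sk Adj rN) * q ^ N := le_mul_of_one_le_left (pow_nonneg hq0 N) hsk1
  calc linfOpNorm P ≤ Real.sqrt (sk Adj rN) * q ^ N + Real.sqrt d * Real.exp (-(rN : ℝ)) := h1
  _ ≤ 2 * Real.sqrt (sk Adj rN) * q ^ N := by linarith
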